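/- Let α > 1, n ≥ 1, σ > 0, and let p, p' : Fin m → ℝ be probability vectors that differ in exactly two coordinates: p' j1 = p j1 + 1/n, p' j2 = p j2 − 1/n for some j1 ≠ j2 (with p j2 ≥ 1/n), and p' i = p i otherwise. If Σ_i (p i)^α ≥ σ and Σ_i (p' i)^α ≥ σ, then |H_α(p) − H_α(p')| ≤ 2α/((α − 1)·σ·n·ln 2). -/
import Mathlib


open Finset

/-- Base-2 Rényi entropy of order `α` of a probability vector `p`. -/
noncomputable def renyiEntropy {m : ℕ} (α : ℝ) (p : Fin m → ℝ) : ℝ :=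
  (1 / (1 - α)) * Real.logb 2 (∑ i, (p i) ^ α)

lemma rpow_lip {α : ℝ} (hα : 1 ≤ α) {a b : ℝ}
    (ha : a ∈ Set.Icc (0:ℝ) 1) (hb : b ∈ Set.Icc (0:ℝ) 1) :
    |b ^ α - a ^ α| ≤ α * |b - a| := by
  have hα0 : 0 ≤ α := le_trans zero_le_one hα
  have hderiv : ∀ x ∈ Set.Icc (0:ℝ) 1,
      HasDerivWithinAt (fun x : ℝ => x ^ α) (α * x ^ (α - 1)) (Set.Icc 0 1) x :=
    fun x _ => (Real.hasDerivAt_rpow_const (Or.inr hα)).hasDerivWithinAt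
  have hbound : ∀ x ∈ Set.Icc (0:ℝ) 1, ‖α * x ^ (α - 1)‖ ≤ α := by
    intro x hx
    have h1 : x ^ (α - 1) ≤ 1 := Real.rpow_le_one hx.1 hx.2 (by linarith)
    have h2 : 0 ≤ x ^ (α - 1) := Real.rpow_nonneg hx.1 _
    rw [Real.norm_eq_abs, abs_of_nonneg (mul_nonneg hα0 h2)]
    nlinarith
  have := (convex_Icc (0:ℝ) 1).norm_image_sub_le_of_norm_hasDerivWithin_le
    hderiv hbound ha hb
  simpa [Real.norm_eq_abs] using this

lemma log_diff_le_aux {σ x y : ℝ} (hσ : 0 < σ) (hx : σ ≤ x) (hy : σ ≤ y) :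
    Real.log x - Real.log y ≤ |x - y| / σ := by
  have hx0 : 0 < x := lt_of_lt_of_le hσ hx
  have hy0 : 0 < y := lt_of_lt_of_le hσ hy
  rcases le_or_gt x y with h | h
  · have : Real.log x ≤ Real.log y := Real.log_le_log hx0 h
    have : Real.log x - Real.log y ≤ 0 := by linarith
    exact this.trans (div_nonneg (abs_nonneg _) hσ.le)
  · have hdiv : Real.log x - Real.log y = Real.log (x / y) := by
      rw [Real.log_div hx0.ne' hy0.ne']
    rw [hdiv]
    have h1 : Real.log (x / y) ≤ x / y - 1 :=
      Real.log_le_sub_one_of_pos (div_pos hx0 hy0)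
    have h2 : x / y - 1 = (x - y) / y := by field_simp
    have h3 : (x - y) / y ≤ (x - y) / σ :=
      div_le_div_of_nonneg_left (by linarith) hσ hy
    have h4 : (x - y) / σ = |x - y| / σ := by rw [abs_of_pos (by linarith)]
    linarith

lemma log_diff_le {σ x y : ℝ} (hσ : 0 < σ) (hx : σ ≤ x) (hy : σ ≤ y) :
    |Real.log x - Real.log y| ≤ |x - y| / σ := by
  rw [abs_sub_le_iff]
  refine ⟨log_diff_le_aux hσ hx hy, ?_⟩
  rw [abs_sub_comm]
  exact log_diff_le_aux hσ hy hx

/-- Rényi entropy sensitivity for adjacent normalized histograms of size `n`: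
if both power sums are at least `σ > 0`, then
`|H_α(p) − H_α(p')| ≤ 2α/((α − 1)·σ·n·ln 2)`. -/
theorem renyi_entropy_sensitivity
    {m : ℕ} (α : ℝ) (hα : 1 < α) (n : ℕ) (hn : 1 ≤ n) (σ : ℝ) (hσ : 0 < σ)
    (p p' : Fin m → ℝ)
    (hp0 : ∀ i, 0 ≤ p i) (hpsum : ∑ i, p i = 1)
    (hp'0 : ∀ i, 0 ≤ p' i) (hp'sum : ∑ i, p' i = 1)
    (j1 j2 : Fin m) (hj : j1 ≠ j2)
    (h1 : p' j1 = p j1 + 1 / n)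
    (h2ge : 1 / (n : ℝ) ≤ p j2) (h2 : p' j2 = p j2 - 1 / n)
    (hother : ∀ i, i ≠ j1 → i ≠ j2 → p' i = p i)
    (hS : σ ≤ ∑ i, (p i) ^ α) (hS' : σ ≤ ∑ i, (p' i) ^ α) :
    |renyiEntropy α p - renyiEntropy α p'| ≤
      2 * α / ((α - 1) * σ * n * Real.log 2) := by
  have hn0 : (0:ℝ) < n := by exact_mod_cast hn
  have hα0 : 0 < α := by linarith
  set S := ∑ i, (p i) ^ α with hSdef
  set S' := ∑ i, (p' i) ^ α with hS'def
  have hS0 : 0 < S := lt_of_lt_of_le hσ hS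
  have hS'0 : 0 < S' := lt_of_lt_of_le hσ hS'
  have hp1 : ∀ i, p i ∈ Set.Icc (0:ℝ) 1 := by
    intro i
    refine ⟨hp0 i, ?_⟩
    calc p i ≤ ∑ j, p j := Finset.single_le_sum (fun j _ => hp0 j) (mem_univ i)
      _ = 1 := hpsum
  have hp'1 : ∀ i, p' i ∈ Set.Icc (0:ℝ) 1 := by
    intro i
    refine ⟨hp'0 i, ?_⟩
    calc p' i ≤ ∑ j, p' j := Finset.single_le_sum (fun j _ => hp'0 j) (mem_univ i)
      _ = 1 := hp'sum
  -- sum difference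
  have hsumdiff : S' - S = (p' j1 ^ α - p j1 ^ α) + (p' j2 ^ α - p j2 ^ α) := by
    have : S' - S = ∑ i, (p' i ^ α - p i ^ α) := by
      rw [Finset.sum_sub_distrib]
    rw [this]
    have hsub : ({j1, j2} : Finset (Fin m)) ⊆ univ := subset_univ _
    rw [← Finset.sum_subset hsub (by
      intro x _ hx
      simp only [mem_insert, mem_singleton, not_or] at hx
      rw [hother x hx.1 hx.2]; ring)]
    rw [Finset.sum_pair hj]
  have hlip1 : |p' j1 ^ α - p j1 ^ α| ≤ α * (1 / n) := by
    have := rpow_lip hα.le (hp1 j1) (hp'1 j1)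
    have heq : p' j1 - p j1 = 1 / n := by rw [h1]; ring
    have habs : |p' j1 - p j1| = 1 / n := by
      rw [heq, abs_of_nonneg (by positivity : (0:ℝ) ≤ 1 / n)]
    rw [habs] at this
    simpa using this
  have hlip2 : |p' j2 ^ α - p j2 ^ α| ≤ α * (1 / n) := by
    have := rpow_lip hα.le (hp1 j2) (hp'1 j2)
    have heq : p' j2 - p j2 = -(1 / n) := by rw [h2]; ring
    have habs : |p' j2 - p j2| = 1 / n := by
      rw [heq, abs_neg, abs_of_nonneg (by positivity : (0:ℝ) ≤ 1 / n)]
    rw [habs] at this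
    simpa using this
  have hSdiff : |S' - S| ≤ 2 * α / n := by
    rw [hsumdiff]
    calc |(p' j1 ^ α - p j1 ^ α) + (p' j2 ^ α - p j2 ^ α)|
        ≤ |p' j1 ^ α - p j1 ^ α| + |p' j2 ^ α - p j2 ^ α| := abs_add_le _ _
      _ ≤ α * (1/n) + α * (1/n) := add_le_add hlip1 hlip2
      _ = 2 * α / n := by ring
  have hlog : |Real.log S - Real.log S'| ≤ (2 * α / n) / σ := by
    refine (log_diff_le hσ hS hS').trans ?_
    rw [abs_sub_comm]
    gcongr
  have hlog2 : (0:ℝ) < Real.log 2 := Real.log_pos (by norm_num)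
  have key : renyiEntropy α p - renyiEntropy α p' =
      (1 / (1 - α)) * ((Real.log S - Real.log S') / Real.log 2) := by
    unfold renyiEntropy
    rw [Real.logb, Real.logb]
    ring
  rw [key, abs_mul]
  have habs1 : |1 / (1 - α)| = 1 / (α - 1) := by
    rw [abs_div, abs_one, abs_of_neg (by linarith : (1:ℝ) - α < 0)]
    ring_nf
  have habs2 : |(Real.log S - Real.log S') / Real.log 2| =
      |Real.log S - Real.log S'| / Real.log 2 := by
    rw [abs_div, abs_of_pos hlog2]
  rw [habs1, habs2]
  calc 1 / (α - 1) * (|Real.log S - Real.log S'| / Real.log 2)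
      ≤ 1 / (α - 1) * ((2 * α / n / σ) / Real.log 2) := mul_le_mul_of_nonneg_left (by gcongr) (div_nonneg zero_le_one (by linarith))
    _ = 2 * α / ((α - 1) * σ * n * Real.log 2) := by
        field_simp
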